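/- Let λ ∈ ℂ, let u : ℝ → ℂ be differentiable, and let f₁, f₂ : ℝ → ℂ be differentiable functions satisfying f₁'(x) = -iλ f₁(x) + i u(x) f₂(x) and f₂'(x) = -i u(x) f₁(x) + iλ f₂(x) for all x ∈ ℝ. Then the function g := f₁ + i·f₂ is twice differentiable and satisfies -g''(x) + (u'(x) + u(x)²) g(x) = λ² g(x) for all x ∈ ℝ. -/

import Mathlib

/-!
With `g = f₁ + i f₂` and `k = -iλ (f₁ - i f₂)` the Zakharov–Shabat system at `(λ, (u, u))` becomes
`g' = u g + k`, `k' = -u k - λ² g`, i.e. `(∂ - u) g = k` and `(∂ + u) k = -λ² g`. Eliminating `k`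
gives `g'' = (u' + u² - λ²) g`: this is the Miura factorization `-∂² + u' + u² = -(∂ + u)(∂ - u)`.
-/

open Complex

theorem hasDerivAt_deriv_of_miura_system {𝕜 𝔸 : Type*} [NontriviallyNormedField 𝕜]
    [NormedCommRing 𝔸] [NormedAlgebra 𝕜 𝔸] {u g k : 𝕜 → 𝔸} {μ : 𝔸} (hu : Differentiable 𝕜 u)
    (hg : ∀ x, HasDerivAt g (u x * g x + k x) x)
    (hk : ∀ x, HasDerivAt k (-(u x * k x) - μ * g x) x) (x : 𝕜) :
    HasDerivAt (deriv g) ((deriv u x + u x ^ 2 - μ) * g x) x := by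
  have hg' : deriv g = fun x => u x * g x + k x := funext fun x => (hg x).deriv
  rw [hg']
  exact ((hu x).hasDerivAt.mul (hg x)).add (hk x) |>.congr_deriv (by ring)

section ZakharovShabat

variable {lam : ℂ} {u f₁ f₂ : ℝ → ℂ} {x : ℝ}

theorem hasDerivAt_zs_add_I_mul (hf₁ : HasDerivAt f₁ (-I * lam * f₁ x + I * u x * f₂ x) x)
    (hf₂ : HasDerivAt f₂ (-I * u x * f₁ x + I * lam * f₂ x) x) :
    HasDerivAt (fun x => f₁ x + I * f₂ x)
      (u x * (f₁ x + I * f₂ x) + -I * lam * (f₁ x - I * f₂ x)) x := by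
  refine (hf₁.add (hf₂.const_mul I)).congr_deriv ?_
  linear_combination -(u x * f₁ x) * I_sq

theorem hasDerivAt_zs_sub_I_mul (hf₁ : HasDerivAt f₁ (-I * lam * f₁ x + I * u x * f₂ x) x)
    (hf₂ : HasDerivAt f₂ (-I * u x * f₁ x + I * lam * f₂ x) x) :
    HasDerivAt (fun x => -I * lam * (f₁ x - I * f₂ x))
      (-(u x * (-I * lam * (f₁ x - I * f₂ x))) - lam ^ 2 * (f₁ x + I * f₂ x)) x := by
  refine ((hf₁.sub (hf₂.const_mul I)).const_mul (-I * lam)).congr_deriv ?_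
  linear_combination (lam ^ 2 * f₁ x + I * lam ^ 2 * f₂ x - I * lam * u x * f₁ x) * I_sq

end ZakharovShabat

theorem zs_to_hill_solution
    (lam : ℂ) (u f₁ f₂ : ℝ → ℂ)
    (hu : Differentiable ℝ u)
    (hf₁ : ∀ x : ℝ, HasDerivAt f₁ (-I * lam * f₁ x + I * u x * f₂ x) x)
    (hf₂ : ∀ x : ℝ, HasDerivAt f₂ (-I * u x * f₁ x + I * lam * f₂ x) x) :
    let g : ℝ → ℂ := fun x => f₁ x + I * f₂ x
    (∀ x : ℝ, DifferentiableAt ℝ g x) ∧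
    (∀ x : ℝ, DifferentiableAt ℝ (deriv g) x) ∧
    (∀ x : ℝ, -(deriv (deriv g) x) + (deriv u x + u x ^ 2) * g x = lam ^ 2 * g x) := by
  intro g
  have hg x := hasDerivAt_zs_add_I_mul (hf₁ x) (hf₂ x)
  have hg' x := hasDerivAt_deriv_of_miura_system hu hg
    (fun x => hasDerivAt_zs_sub_I_mul (hf₁ x) (hf₂ x)) x
  refine ⟨fun x => (hg x).differentiableAt, fun x => (hg' x).differentiableAt, fun x => ?_⟩
  rw [(hg' x).deriv]
  ring
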